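/- arXiv:1906.02895 — 2 statements merged into one kernel-verified Lean document; each statement's English description precedes it below -/
import Mathlib

section
/- Let G be a finite simple graph with at least one edge. Then Eρ(G) < maxρ(G) ≤ mr(F₂,G) ≤ nd(G) < 2^{2·maxρ(G)+2} ≤ 2^{8·Eρ(G)+2}. -/
open scoped Classical

namespace AvgCutRank

variable {V : Type*} {W : Type*}

/-- Local complementation of `G` at a vertex `v`: complement the adjacency inside
the neighborhood of `v`. -/
def localComp (G : SimpleGraph V) (v : V) : SimpleGraph V where
  Adj x y := x ≠ y ∧ (G.Adj x y ↔ ¬(G.Adj v x ∧ G.Adj v y))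
  symm := by
    constructor
    rintro x y ⟨hxy, h⟩
    refine ⟨hxy.symm, ?_⟩
    rw [G.adj_comm y x, and_comm]
    exact h
  loopless := ⟨fun x h => h.1 rfl⟩

/-- Two graphs on the same vertex set are locally equivalent if one is obtained from
the other by a sequence of local complementations. -/
def LocallyEquivalent (G H : SimpleGraph V) : Prop :=
  Relation.ReflTransGen (fun A B => ∃ v, B = localComp A v) G H

/-- `H` is (isomorphic to) a vertex-minor of `G`: `H` is isomorphic to an induced
subgraph of a graph locally equivalent to `G`. -/
def IsVertexMinor (H : SimpleGraph W) (G : SimpleGraph V) : Prop :=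
  ∃ (G' : SimpleGraph V) (s : Set V), LocallyEquivalent G G' ∧ Nonempty (H ≃g G'.induce s)

/-- The cut-rank of a set `X` of vertices: the rank over GF(2) of the `X × Xᶜ`
adjacency submatrix. -/
noncomputable def cutRank [Fintype V] [DecidableEq V] (G : SimpleGraph V)
    (X : Finset V) : ℕ :=
  (Matrix.of fun (i : X) (j : (Xᶜ : Finset V)) =>
    if G.Adj i.1 j.1 then (1 : ZMod 2) else 0).rank

/-- The average cut-rank of a graph. -/
noncomputable def avgCutRank [Fintype V] [DecidableEq V] (G : SimpleGraph V) : ℝ :=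
  (∑ X : Finset V, (cutRank G X : ℝ)) / 2 ^ Fintype.card V

/-- The maximum cut-rank of a graph. -/
noncomputable def maxCutRank [Fintype V] [DecidableEq V] (G : SimpleGraph V) : ℕ :=
  Finset.univ.sup (cutRank G)

/-- `x` and `y` are equal or twins: they have the same neighbors outside `{x, y}`. -/
def TwinEq (G : SimpleGraph V) (x y : V) : Prop :=
  x = y ∨ ∀ z, z ≠ x → z ≠ y → (G.Adj x z ↔ G.Adj y z)

/-- `x` and `y` are twins. -/
def IsTwins (G : SimpleGraph V) (x y : V) : Prop :=
  x ≠ y ∧ ∀ z, z ≠ x → z ≠ y → (G.Adj x z ↔ G.Adj y z)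

/-- Neighborhood diversity: the number of twin classes. -/
noncomputable def nd [Fintype V] [DecidableEq V] (G : SimpleGraph V) : ℕ :=
  (Finset.univ.image fun x => Finset.univ.filter fun y => TwinEq G x y).card

/-- The minimum rank of a graph over a field `F`. -/
noncomputable def minRank (F : Type*) [Field F] [Fintype V] [DecidableEq V]
    (G : SimpleGraph V) : ℕ :=
  sInf { r : ℕ | ∃ A : Matrix V V F, A.IsSymm ∧
    (∀ i j, i ≠ j → (A i j ≠ 0 ↔ G.Adj i j)) ∧ A.rank = r }

/-- The clique delta-cover number: the minimum `t` such that the edge set of `G` is the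
symmetric difference of the edge sets of `t` complete graphs (given by their vertex sets). -/
noncomputable def cliqueDeltaCover [Fintype V] [DecidableEq V] (G : SimpleGraph V) : ℕ :=
  sInf { t : ℕ | ∃ S : Fin t → Finset V, ∀ x y : V, x ≠ y →
    (G.Adj x y ↔ Odd (Finset.univ.filter fun i => x ∈ S i ∧ y ∈ S i).card) }

/-- `C` is the vertex set of an attached star in `G`: the subgraph induced on `C` is a
star (with center `c`) all of whose noncentral vertices are leaves of `G`. -/
def IsAttachedStar (G : SimpleGraph V) (C : Set V) : Prop :=
  ∃ c ∈ C, (∃ x ∈ C, x ≠ c) ∧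
    ∀ x ∈ C, x ≠ c → G.Adj c x ∧ ∀ y, G.Adj x y → y = c

/-- Deletion of a vertex: the induced subgraph on the complement of `{v}`. -/
def deleteVert (G : SimpleGraph V) (v : V) : SimpleGraph {w : V // w ≠ v} :=
  SimpleGraph.comap Subtype.val G

/-- Deletion of a finite set of vertices. -/
def deleteVerts (G : SimpleGraph V) (T : Finset V) : SimpleGraph {w : V // w ∉ T} :=
  SimpleGraph.comap Subtype.val G

/-- The star `K_{1,m}` with center `0`. -/
def starGraph (m : ℕ) : SimpleGraph (Fin (m + 1)) :=
  SimpleGraph.fromRel fun x _ => x = 0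

/-- The disjoint union of three copies of `K₂`. -/
def threeK2 : SimpleGraph (Fin 6) :=
  SimpleGraph.fromRel fun x y =>
    (x = 0 ∧ y = 1) ∨ (x = 2 ∧ y = 3) ∨ (x = 4 ∧ y = 5)

/-- The disjoint union of two paths on three vertices. -/
def twoP3 : SimpleGraph (Fin 6) :=
  SimpleGraph.fromRel fun x y =>
    (x = 0 ∧ y = 1) ∨ (x = 1 ∧ y = 2) ∨ (x = 3 ∧ y = 4) ∨ (x = 4 ∧ y = 5)

/-- The disjoint union of `K₂` and the star `K_{1,k+1}`. -/
def K2PlusStar (k : ℕ) : SimpleGraph (Fin (k + 4)) :=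
  SimpleGraph.fromRel fun x y => (x.val = 0 ∧ y.val = 1) ∨ (x.val = 2 ∧ 3 ≤ y.val)

/-- `E_k`: the star `K_{1,k+1}` with one edge subdivided. Vertex `0` is the center,
`1` is the subdivision vertex, `2` is the leaf behind it, `3, …, k+2` are leaves. -/
def Egraph (k : ℕ) : SimpleGraph (Fin (k + 3)) :=
  SimpleGraph.fromRel fun x y =>
    (x.val = 0 ∧ y.val = 1) ∨ (x.val = 1 ∧ y.val = 2) ∨ (x.val = 0 ∧ 3 ≤ y.val)

/-- Finite graphs represented on the vertex sets `Fin n`. -/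
abbrev GraphOn := Σ n : ℕ, SimpleGraph (Fin n)

/-- `H` is isomorphic to an induced subgraph of `G`. -/
def IsIndSubgraph (H G : GraphOn) : Prop :=
  ∃ s : Set (Fin G.1), Nonempty (H.2 ≃g G.2.induce s)

/-- The sequence `x_n(ε)` from the paper. -/
noncomputable def xseq (ε : ℝ) : ℕ → ℤ
  | 0 => max ⌊2 - Real.logb 2 (1 - ε)⌋ 5
  | n + 1 => 2 ^ (8 * (n + 1) + 10) *
      ⌊(xseq ε n : ℝ) - Real.logb 2 (1 - Int.fract ((2 : ℝ) ^ (xseq ε n) * ε / 2)) + 1⌋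

/-!
`Eρ < maxρ` since `ρ(∅) = 0 < maxρ`. For `maxρ ≤ 4 Eρ`, cut the `Z × Zᶜ` matrix of a maximiser
`Z` into four blocks along an arbitrary `X`: each block is a submatrix of the cut matrix of
`X ∆ Zᶜ`, `X`, `Xᶜ` or `X ∆ Z`, and each of these four cut-ranks averages to `Eρ` over `X`.

Every cut matrix is a submatrix of any matrix fitting `G` over `F₂`, so `maxρ ≤ mr`. Putting a `1`
on the diagonal exactly at vertices adjacent to a twin gives a fitting matrix in which twins have
equal rows, so `mr ≤ nd`.

For the last bound take `X` maximal such that the rows of its cut matrix are independent, so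
`|X| = ρ(X) ≤ maxρ`. For `v ∉ X` the rows of `X ∪ {v}` become dependent. Either `v` takes part in
the dependency, and then `v` is determined up to twins by the rest of the dependency together with
`N(v) ∩ X`, or it does not, and then `v` is the only column outside `X` on which a nonempty set of
rows of `X` has nonzero sum. Hence `nd ≤ 2 · 4^|X| + |X| < 4^(maxρ + 1)`.
-/

open Finset

theorem rank_le_rank_submatrix_add_rank_submatrix {m n ι κ K : Type*} [Field K]
    [Fintype m] [Fintype n] [Fintype ι] [Fintype κ] (M : Matrix m n K) (f : ι → m) (g : κ → m)
    (hfg : ∀ i, i ∈ Set.range f ∨ i ∈ Set.range g) :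
    M.rank ≤ (M.submatrix f id).rank + (M.submatrix g id).rank := by
  simp only [Matrix.rank_eq_finrank_span_row]
  refine (Submodule.finrank_mono ?_).trans (Submodule.finrank_add_le_finrank_add_finrank _ _)
  refine Submodule.span_le.2 ?_
  rintro _ ⟨i, rfl⟩
  rcases hfg i with ⟨a, rfl⟩ | ⟨b, rfl⟩
  · exact Submodule.mem_sup_left (Submodule.subset_span ⟨a, rfl⟩)
  · exact Submodule.mem_sup_right (Submodule.subset_span ⟨b, rfl⟩)

theorem linearIndependent_zmod_two_of_sum_ne_zero {ι M : Type*} [AddCommGroup M]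
    [Module (ZMod 2) M] {v : ι → M} (h : ∀ t : Finset ι, t.Nonempty → ∑ i ∈ t, v i ≠ 0) :
    LinearIndependent (ZMod 2) v := by
  refine linearIndependent_iff'.2 fun s g hg i hi => by_contra fun hgi => ?_
  refine h (s.filter (g · ≠ 0)) ⟨i, mem_filter.2 ⟨hi, hgi⟩⟩ ?_
  rw [← hg, sum_filter]
  refine sum_congr rfl fun j _ => ?_
  split_ifs with hj
  · rw [(by decide : ∀ a : ZMod 2, a ≠ 0 → a = 1) _ hj, one_smul]
  · rw [not_not.1 hj, zero_smul]

theorem card_image_le_card_image_of_factor {α β γ : Type*} [Fintype α] [DecidableEq β]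
    [DecidableEq γ] {f : α → β} {g : α → γ} (h : ∀ x y, f x = f y → g x = g y) :
    #(univ.image g) ≤ #(univ.image f) := by
  refine card_le_card_of_forall_subsingleton (fun c b => ∃ x, g x = c ∧ f x = b) ?_ ?_
  · simp
  · rintro b - c₁ ⟨-, x₁, rfl, hx₁⟩ c₂ ⟨-, x₂, rfl, hx₂⟩
    exact h _ _ (hx₁.trans hx₂.symm)

theorem sum_comp_involutive {α M : Type*} [Fintype α] [AddCommMonoid M] {φ : α → α}
    (hφ : Function.Involutive φ) (f : α → M) : ∑ a, f (φ a) = ∑ a, f a :=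
  Fintype.sum_bijective φ hφ.bijective _ _ fun _ => rfl

section CrossRank

variable (G : SimpleGraph V)

noncomputable def crossRank (P Q : Finset V) : ℕ :=
  ((G.adjMatrix (ZMod 2)).submatrix (Subtype.val : P → V) (Subtype.val : Q → V)).rank

theorem rank_adjMatrix_submatrix_le_crossRank {ι κ : Type*} [Fintype κ] {P Q : Finset V}
    (f : ι → V) (g : κ → V) (hf : ∀ i, f i ∈ P) (hg : ∀ j, g j ∈ Q) :
    ((G.adjMatrix (ZMod 2)).submatrix f g).rank ≤ crossRank G P Q := by
  have := Matrix.rank_submatrix_le ((G.adjMatrix (ZMod 2)).submatrix (Subtype.val : P → V)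
    (Subtype.val : Q → V)) (fun i => ⟨f i, hf i⟩) (fun j => ⟨g j, hg j⟩)
  rwa [Matrix.submatrix_submatrix] at this

theorem crossRank_mono {P P' Q Q' : Finset V} (hP : P' ⊆ P) (hQ : Q' ⊆ Q) :
    crossRank G P' Q' ≤ crossRank G P Q :=
  rank_adjMatrix_submatrix_le_crossRank G _ _ (fun i => hP i.2) (fun j => hQ j.2)

theorem crossRank_comm (P Q : Finset V) : crossRank G P Q = crossRank G Q P := by
  rw [crossRank, ← Matrix.rank_transpose, Matrix.transpose_submatrix,
    (G.isSymm_adjMatrix (α := ZMod 2)).eq, crossRank]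

variable [DecidableEq V]

theorem crossRank_le_inter_add_sdiff_left (P Q S : Finset V) :
    crossRank G P Q ≤ crossRank G (P ∩ S) Q + crossRank G (P \ S) Q := by
  have := rank_le_rank_submatrix_add_rank_submatrix
    ((G.adjMatrix (ZMod 2)).submatrix (Subtype.val : P → V) (Subtype.val : Q → V))
    (fun i : ↥(P ∩ S) => ⟨i, (mem_inter.1 i.2).1⟩)
    (fun i : ↥(P \ S) => ⟨i, (mem_sdiff.1 i.2).1⟩) fun i => ?_
  · rw [Matrix.submatrix_submatrix, Matrix.submatrix_submatrix] at this
    exact this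
  by_cases hi : i.1 ∈ S
  · exact Or.inl ⟨⟨i, mem_inter.2 ⟨i.2, hi⟩⟩, rfl⟩
  · exact Or.inr ⟨⟨i, mem_sdiff.2 ⟨i.2, hi⟩⟩, rfl⟩

theorem crossRank_le_inter_add_sdiff_right (P Q S : Finset V) :
    crossRank G P Q ≤ crossRank G P (Q ∩ S) + crossRank G P (Q \ S) := by
  simpa only [crossRank_comm G P] using crossRank_le_inter_add_sdiff_left G Q P S

end CrossRank

section CutRank

variable [Fintype V] [DecidableEq V] (G : SimpleGraph V)

theorem cutRank_eq_crossRank (X : Finset V) : cutRank G X = crossRank G X Xᶜ := rfl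

open scoped symmDiff in
theorem cutRank_le_add_symmDiff (Z X : Finset V) :
    cutRank G Z ≤ cutRank G (X ∆ Zᶜ) + cutRank G X + cutRank G Xᶜ + cutRank G (X ∆ Z) := by
  have hrow := crossRank_le_inter_add_sdiff_left G Z Zᶜ X
  have hcol₁ := crossRank_le_inter_add_sdiff_right G (Z ∩ X) Zᶜ X
  have hcol₂ := crossRank_le_inter_add_sdiff_right G (Z \ X) Zᶜ X
  have h₁ : crossRank G (Z ∩ X) (Zᶜ ∩ X) ≤ cutRank G (X ∆ Zᶜ) := crossRank_mono G ?_ ?_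
  have h₂ : crossRank G (Z ∩ X) (Zᶜ \ X) ≤ cutRank G X := crossRank_mono G ?_ ?_
  have h₃ : crossRank G (Z \ X) (Zᶜ ∩ X) ≤ cutRank G Xᶜ := crossRank_mono G ?_ ?_
  have h₄ : crossRank G (Z \ X) (Zᶜ \ X) ≤ cutRank G (X ∆ Z) := crossRank_mono G ?_ ?_
  · rw [cutRank_eq_crossRank]
    omega
  all_goals grind [mem_symmDiff, mem_compl]

open scoped symmDiff in
theorem two_pow_card_mul_maxCutRank_le :
    2 ^ Fintype.card V * maxCutRank G ≤ 4 * ∑ X, cutRank G X := by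
  obtain ⟨Z, -, hZ⟩ := exists_mem_eq_sup univ univ_nonempty (cutRank G)
  have hsymm (W : Finset V) : ∑ X, cutRank G (X ∆ W) = ∑ X, cutRank G X :=
    sum_comp_involutive (φ := (· ∆ W)) (symmDiff_symmDiff_cancel_right W) _
  calc 2 ^ Fintype.card V * maxCutRank G = ∑ _X : Finset V, cutRank G Z := by
        rw [maxCutRank, hZ, sum_const, card_univ, Fintype.card_finset, smul_eq_mul]
    _ ≤ ∑ X, (cutRank G (X ∆ Zᶜ) + cutRank G X + cutRank G Xᶜ + cutRank G (X ∆ Z)) :=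
        sum_le_sum fun X _ => cutRank_le_add_symmDiff G Z X
    _ = 4 * ∑ X, cutRank G X := by
        simp only [sum_add_distrib, hsymm, sum_comp_involutive compl_involutive]
        ring

theorem maxCutRank_le_four_mul_avgCutRank : (maxCutRank G : ℝ) ≤ 4 * avgCutRank G := by
  rw [avgCutRank, mul_div_assoc', le_div_iff₀ (by positivity), mul_comm]
  exact_mod_cast two_pow_card_mul_maxCutRank_le G

theorem cutRank_empty : cutRank G ∅ = 0 :=
  Nat.le_zero.1 ((Matrix.rank_le_card_height _).trans_eq (by simp))

theorem one_le_cutRank_singleton {x y : V} (hxy : G.Adj x y) : 1 ≤ cutRank G {x} := by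
  have h : (G.adjMatrix (ZMod 2)).submatrix (fun _ : Unit => x) (fun _ : Unit => y) = 1 := by
    ext; simp [hxy]
  have := rank_adjMatrix_submatrix_le_crossRank G _ _ (P := {x}) (Q := {x}ᶜ)
    (fun _ : Unit => mem_singleton_self x) (fun _ : Unit => by simpa using hxy.ne')
  rwa [h, Matrix.rank_one, Fintype.card_unit] at this

theorem sum_cutRank_lt (hE : ∃ x y, G.Adj x y) :
    ∑ X, cutRank G X < 2 ^ Fintype.card V * maxCutRank G := by
  obtain ⟨x, y, hxy⟩ := hE
  calc ∑ X, cutRank G X < ∑ _X : Finset V, maxCutRank G := by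
        refine sum_lt_sum (fun X _ => le_sup (mem_univ X)) ⟨∅, mem_univ _, ?_⟩
        rw [cutRank_empty]
        exact (one_le_cutRank_singleton G hxy).trans (le_sup (mem_univ _))
    _ = 2 ^ Fintype.card V * maxCutRank G := by
        rw [sum_const, card_univ, Fintype.card_finset, smul_eq_mul]

theorem avgCutRank_lt_maxCutRank (hE : ∃ x y, G.Adj x y) : avgCutRank G < maxCutRank G := by
  rw [avgCutRank, div_lt_iff₀ (by positivity), mul_comm]
  exact_mod_cast sum_cutRank_lt G hE

theorem cutRank_le_rank {A : Matrix V V (ZMod 2)}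
    (hadj : ∀ i j, i ≠ j → (A i j ≠ 0 ↔ G.Adj i j)) (X : Finset V) : cutRank G X ≤ A.rank := by
  have hsub : (G.adjMatrix (ZMod 2)).submatrix (Subtype.val : X → V) (Subtype.val : ↥Xᶜ → V) =
      A.submatrix Subtype.val Subtype.val := by
    ext ⟨i, hi⟩ ⟨j, hj⟩
    have hij : i ≠ j := by rintro rfl; simp_all
    by_cases h : G.Adj i j
    · simpa [h] using ((by decide : ∀ a : ZMod 2, a ≠ 0 → a = 1) _ ((hadj i j hij).2 h)).symm
    · simpa [h] using (not_not.1 (mt (hadj i j hij).1 h)).symm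
  rw [cutRank_eq_crossRank, crossRank, hsub]
  exact Matrix.rank_submatrix_le _ _ _

end CutRank

section MinRank

variable [Fintype V] (G : SimpleGraph V)

theorem minRank_le_rank {F : Type*} [Field F] [DecidableEq V] {A : Matrix V V F}
    (hA : A.IsSymm) (hadj : ∀ i j, i ≠ j → (A i j ≠ 0 ↔ G.Adj i j)) : minRank F G ≤ A.rank :=
  Nat.sInf_le ⟨A, hA, hadj, rfl⟩

theorem exists_rank_eq_minRank (F : Type*) [Field F] [DecidableEq V] :
    ∃ A : Matrix V V F, A.IsSymm ∧ (∀ i j, i ≠ j → (A i j ≠ 0 ↔ G.Adj i j)) ∧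
      A.rank = minRank F G :=
  Nat.sInf_mem (s := {r | ∃ A : Matrix V V F, A.IsSymm ∧
      (∀ i j, i ≠ j → (A i j ≠ 0 ↔ G.Adj i j)) ∧ A.rank = r})
    ⟨_, G.adjMatrix F, G.isSymm_adjMatrix, fun i j _ => by by_cases h : G.Adj i j <;> simp [h], rfl⟩

theorem maxCutRank_le_minRank [DecidableEq V] : maxCutRank G ≤ minRank (ZMod 2) G := by
  obtain ⟨A, -, hadj, hA⟩ := exists_rank_eq_minRank G (ZMod 2)
  exact Finset.sup_le fun X _ => hA ▸ cutRank_le_rank G hadj X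

end MinRank

namespace TwinEq

variable {G : SimpleGraph V}

theorem adj_iff {a b z : V} (h : TwinEq G a b) (hza : z ≠ a) (hzb : z ≠ b) :
    G.Adj a z ↔ G.Adj b z := by
  rcases h with rfl | h
  exacts [Iff.rfl, h z hza hzb]

theorem symm {a b : V} (h : TwinEq G a b) : TwinEq G b a :=
  h.imp Eq.symm fun h z hzb hza => (h z hza hzb).symm

theorem trans {a b c : V} (hab : TwinEq G a b) (hbc : TwinEq G b c) : TwinEq G a c := by
  rcases eq_or_ne a b with rfl | hab'
  · exact hbc
  rcases eq_or_ne b c with rfl | hbc'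
  · exact hab
  refine or_iff_not_imp_left.2 fun hac' z hza hzc => ?_
  rcases eq_or_ne z b with rfl | hzb
  · rw [G.adj_comm, hbc.adj_iff hab' hac', G.adj_comm, hab.adj_iff (Ne.symm hac') hbc'.symm,
      G.adj_comm]
  · exact (hab.adj_iff hza hzb).trans (hbc.adj_iff hzb hzc)

end TwinEq

theorem IsTwins.exists_adj_iff {G : SimpleGraph V} {i j : V} (h : IsTwins G i j) :
    (∃ k, IsTwins G i k ∧ G.Adj i k) ↔ G.Adj i j := by
  refine ⟨fun ⟨k, hk, hik⟩ => ?_, fun hij => ⟨j, h, hij⟩⟩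
  rcases eq_or_ne k j with rfl | hkj
  · exact hik
  have hkj' : TwinEq G k j := TwinEq.trans (TwinEq.symm (Or.inr hk.2)) (Or.inr h.2)
  exact G.adj_comm _ _ |>.1 ((hkj'.adj_iff hk.1 h.1).1 hik.symm)

section NeighborhoodDiversity

variable [Fintype V] [DecidableEq V] (G : SimpleGraph V)

theorem nd_le_card_image {α : Type*} [DecidableEq α] (f : V → α)
    (hf : ∀ u v, f u = f v → TwinEq G u v) : nd G ≤ #(univ.image f) :=
  card_image_le_card_image_of_factor fun u v huv => filter_congr fun _ _ =>
    ⟨(hf u v huv).symm.trans, (hf u v huv).trans⟩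

theorem card_image_le_nd {α : Type*} [DecidableEq α] (f : V → α)
    (hf : ∀ u v, TwinEq G u v → f u = f v) : #(univ.image f) ≤ nd G :=
  card_image_le_card_image_of_factor fun u v huv => hf u v <| (mem_filter.1 <|
    (Finset.ext_iff.1 huv v).2 (mem_filter.2 ⟨mem_univ v, Or.inl rfl⟩)).2

/-- The diagonal is chosen so that twins have equal rows. -/
noncomputable def twinAdjMatrix : Matrix V V (ZMod 2) :=
  G.adjMatrix (ZMod 2) + Matrix.diagonal fun i => if ∃ j, IsTwins G i j ∧ G.Adj i j then 1 else 0

theorem twinAdjMatrix_isSymm : (twinAdjMatrix G).IsSymm :=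
  G.isSymm_adjMatrix.add (Matrix.isSymm_diagonal _)

theorem twinAdjMatrix_ne_zero_iff {i j : V} (hij : i ≠ j) :
    twinAdjMatrix G i j ≠ 0 ↔ G.Adj i j := by
  by_cases h : G.Adj i j <;> simp [twinAdjMatrix, hij, h]

theorem twinAdjMatrix_row_eq {i j : V} (h : TwinEq G i j) :
    twinAdjMatrix G i = twinAdjMatrix G j := by
  rcases eq_or_ne i j with rfl | hij
  · rfl
  have hi := IsTwins.exists_adj_iff ⟨hij, h.resolve_left hij⟩
  have hj := (IsTwins.exists_adj_iff ⟨hij.symm, h.symm.resolve_left hij.symm⟩).trans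
    (G.adj_comm _ _)
  ext k
  rcases eq_or_ne k i with rfl | hki
  · simp [twinAdjMatrix, hij.symm, hi, G.adj_comm]
  rcases eq_or_ne k j with rfl | hkj
  · simp [twinAdjMatrix, hij, hj]
  simp [twinAdjMatrix, hki.symm, hkj.symm, h.adj_iff hki hkj]

theorem rank_twinAdjMatrix_le : (twinAdjMatrix G).rank ≤ nd G := by
  rw [Matrix.rank_eq_finrank_span_row, ← Set.image_univ, ← coe_univ, ← coe_image]
  exact (finrank_span_finset_le_card _).trans
    (card_image_le_nd G _ fun _ _ => twinAdjMatrix_row_eq G)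

theorem minRank_le_nd : minRank (ZMod 2) G ≤ nd G :=
  (minRank_le_rank G (twinAdjMatrix_isSymm G) fun _ _ => twinAdjMatrix_ne_zero_iff G).trans
    (rank_twinAdjMatrix_le G)

end NeighborhoodDiversity

section CutIndependence

variable [DecidableEq V] (G : SimpleGraph V)

/-- Row `u` of the cut matrix of `X`, extended by zero to all of `V` so that rows for different
`X` live in the same space. -/
noncomputable def cutRow (X : Finset V) (u : V) : V → ZMod 2 :=
  fun z => if z ∈ X then 0 else G.adjMatrix (ZMod 2) u z

/-- Over `F₂` this says that the rows of the cut matrix of `X` are linearly independent. -/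
def IsCutIndep (X : Finset V) : Prop :=
  ∀ T ⊆ X, T.Nonempty → ∑ u ∈ T, cutRow G X u ≠ 0

theorem exists_sum_cutRow_eq_zero {X : Finset V} {v : V} (h : ¬IsCutIndep G (insert v X)) :
    ∃ T ⊆ insert v X, T.Nonempty ∧ ∀ z ≠ v, ∑ w ∈ T, cutRow G X w z = 0 := by
  simp only [IsCutIndep, not_forall, not_not] at h
  obtain ⟨T, hT, hne, hsum⟩ := h
  refine ⟨T, hT, hne, fun z hz => ?_⟩
  simpa [cutRow, Finset.sum_apply, hz] using congrFun hsum z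

theorem twinEq_of_sum_cutRow_eq_zero {X Tu Tv : Finset V} {u v : V} (hu : u ∈ Tu)
    (hv : v ∈ Tv) (hTu : ∀ z ≠ u, ∑ w ∈ Tu, cutRow G X w z = 0)
    (hTv : ∀ z ≠ v, ∑ w ∈ Tv, cutRow G X w z = 0) (hT : Tu.erase u = Tv.erase v)
    (hN : X.filter (G.Adj u) = X.filter (G.Adj v)) : TwinEq G u v := by
  refine Or.inr fun z hzu hzv => ?_
  by_cases hzX : z ∈ X
  · simpa [hzX] using Finset.ext_iff.1 hN z
  have huz := hTu z hzu
  have hvz := hTv z hzv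
  rw [← add_sum_erase _ _ hu, hT] at huz
  rw [← add_sum_erase _ _ hv] at hvz
  have := add_right_cancel (huz.trans hvz.symm)
  by_cases hu' : G.Adj u z <;> by_cases hv' : G.Adj v z <;> simp_all [cutRow]

theorem eq_of_sum_cutRow_eq_zero {X T : Finset V} (hX : IsCutIndep G X) (hTX : T ⊆ X)
    (hT : T.Nonempty) {u v : V} (hTu : ∀ z ≠ u, ∑ w ∈ T, cutRow G X w z = 0)
    (hTv : ∀ z ≠ v, ∑ w ∈ T, cutRow G X w z = 0) : u = v := by
  by_contra huv
  refine hX T hTX hT (funext fun z => ?_)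
  rw [Finset.sum_apply]
  rcases eq_or_ne z u with rfl | hzu
  exacts [hTv z huv, hTu z hzu]

variable [Fintype V]

theorem cutRank_eq_card_of_isCutIndep {X : Finset V} (hX : IsCutIndep G X) :
    cutRank G X = #X := by
  rw [cutRank_eq_crossRank, crossRank, LinearIndependent.rank_matrix, Fintype.card_coe]
  refine linearIndependent_zmod_two_of_sum_ne_zero fun t ht hsum => ?_
  obtain ⟨z, hz⟩ := Function.ne_iff.1 <| hX (t.map (Function.Embedding.subtype _))
    (fun u hu => by obtain ⟨u, -, rfl⟩ := mem_map.1 hu; exact u.2) ht.map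
  by_cases hzX : z ∈ X
  · simp [cutRow, hzX] at hz
  · apply hz
    rw [Finset.sum_apply, sum_map]
    simpa [cutRow, hzX, Finset.sum_apply] using congrFun hsum ⟨z, mem_compl.2 hzX⟩

theorem nd_le_of_isCutIndep_of_maximal {X : Finset V} (hX : IsCutIndep G X)
    (hmax : ∀ v ∉ X, ¬IsCutIndep G (insert v X)) : nd G ≤ 2 * 4 ^ #X + #X := by
  choose! T hTX hTne hTsum using fun v hv => exists_sum_cutRow_eq_zero G (hmax v hv)
  let σ : V → (Bool × Finset V × Finset V) ⊕ V := fun v =>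
    if v ∈ X then .inr v else .inl (decide (v ∈ T v), (T v).erase v, X.filter (G.Adj v))
  have hσ : ∀ u v, σ u = σ v → TwinEq G u v := by
    intro u v h
    by_cases hu : u ∈ X <;> by_cases hv : v ∈ X <;> simp [σ, hu, hv] at h
    · exact Or.inl h
    obtain ⟨hb, hS, hN⟩ := h
    by_cases huT : u ∈ T u
    · exact twinEq_of_sum_cutRow_eq_zero G huT (hb.1 huT) (hTsum u hu) (hTsum v hv) hS hN
    · have hvT : v ∉ T v := fun h => huT (hb.2 h)
      rw [erase_eq_of_notMem huT, erase_eq_of_notMem hvT] at hS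
      exact Or.inl <| eq_of_sum_cutRow_eq_zero G hX
        ((subset_insert_iff_of_notMem huT).1 (hTX u hu)) (hTne u hu) (hTsum u hu)
        (hS ▸ hTsum v hv)
  have himage : univ.image σ ⊆ (univ ×ˢ X.powerset ×ˢ X.powerset).disjSum X := by
    intro s hs
    obtain ⟨v, -, rfl⟩ := mem_image.1 hs
    by_cases hv : v ∈ X
    · simp [σ, hv]
    · simp [σ, hv, ← subset_insert_iff, hTX v hv, em]
  calc nd G ≤ #(univ.image σ) := nd_le_card_image G σ hσ
    _ ≤ #((univ ×ˢ X.powerset ×ˢ X.powerset).disjSum X) := card_le_card himage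
    _ = 2 * 4 ^ #X + #X := by
        simp [card_disjSum, card_product, card_powerset, ← mul_pow]

theorem nd_lt_two_pow : nd G < 2 ^ (2 * maxCutRank G + 2) := by
  obtain ⟨X, hXmem, hXmax⟩ := exists_max_image (univ.filter (IsCutIndep G)) card
    ⟨∅, mem_filter.2 ⟨mem_univ _, fun T hT hne => by simp [subset_empty.1 hT] at hne⟩⟩
  have hX : IsCutIndep G X := (mem_filter.1 hXmem).2
  have hmax : ∀ v ∉ X, ¬IsCutIndep G (insert v X) := fun v hv hind => by
    have := hXmax _ (mem_filter.2 ⟨mem_univ _, hind⟩)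
    rw [card_insert_of_notMem hv] at this
    omega
  have hk : #X ≤ maxCutRank G :=
    (cutRank_eq_card_of_isCutIndep G hX).symm.trans_le (le_sup (mem_univ X))
  have h4 : 4 ^ #X ≤ 4 ^ maxCutRank G := Nat.pow_le_pow_right (by norm_num) hk
  have hlt : maxCutRank G < 4 ^ maxCutRank G := Nat.lt_pow_self (by norm_num)
  calc nd G ≤ 2 * 4 ^ #X + #X := nd_le_of_isCutIndep_of_maximal G hX hmax
    _ < 4 * 4 ^ maxCutRank G := by omega
    _ = 2 ^ (2 * maxCutRank G + 2) := by rw [pow_succ, pow_succ, pow_mul]; ring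

end CutIndependence

/-- For a graph with at least one edge,
`Eρ(G) < maxρ(G) ≤ mr(F₂,G) ≤ nd(G) < 2^(2 maxρ(G) + 2) ≤ 2^(8 Eρ(G) + 2)`. -/
theorem stmt1 {V : Type} [Fintype V] [DecidableEq V] (G : SimpleGraph V)
    (hE : ∃ x y, G.Adj x y) :
    avgCutRank G < maxCutRank G ∧
    maxCutRank G ≤ minRank (ZMod 2) G ∧
    minRank (ZMod 2) G ≤ nd G ∧
    (nd G : ℝ) < 2 ^ (2 * maxCutRank G + 2) ∧
    (2 : ℝ) ^ (2 * maxCutRank G + 2) ≤ (2 : ℝ) ^ (8 * avgCutRank G + 2) := by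
  refine ⟨avgCutRank_lt_maxCutRank G hE, maxCutRank_le_minRank G, minRank_le_nd G,
    by exact_mod_cast nd_lt_two_pow G, ?_⟩
  rw [← Real.rpow_natCast]
  refine Real.rpow_le_rpow_of_exponent_le one_le_two ?_
  push_cast
  linarith [maxCutRank_le_four_mul_avgCutRank G]

end AvgCutRank
end

section
/- Let C be a class of finite simple graphs that is closed under isomorphism and under taking induced subgraphs. If there is a real α such that every graph in C has average cut-rank at most α, then there exist finitely many graphs H₁, …, H_k such that a graph G belongs to C if and only if G has no induced subgraph isomorphic to any H_i. -/
open scoped Classical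

namespace AvgCutRank

variable {V : Type*} {W : Type*}

/-!
Call two vertices twins if they have the same neighbours outside themselves. A graph with `q`
twin classes is a blow-up of a `q`-vertex graph with labelled vertices (a label says whether the
class is a clique or independent), and a blow-up embeds as an induced subgraph into any blow-up
of the same labelled graph whose classes are at least as large.

Among `2 ^ m` pairwise non-twin vertices, repeated halving along a distinguishing vertex gives
`z₁, …, z_m` and `c₁, …, c_m` such that `c_i` sees `z_i` differently from every later `z_j`.
For a cut `X`, the indices `i` with `z_i ∈ X ∌ c_i` index a submatrix of the cut matrix that is a
unitriangular matrix plus a rank-one matrix, so their number is at most `ρ(X) + 1`; each index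
counts for a quarter of all cuts, hence `m ≤ 4 Eρ(G) + 4`.

So in a minimal graph outside `C` (all of whose proper induced subgraphs lie in `C`) the number
of twin classes is bounded in terms of `α`. Such graphs are coded by a labelled graph on a
bounded number of vertices together with the vector of class sizes; by minimality the codes form
an antichain, which is finite by Dickson's lemma.
-/

open Finset

section Twins

variable {G : SimpleGraph V}

theorem twinEq_iff {x y : V} : TwinEq G x y ↔ ∀ z, z ≠ x → z ≠ y → (G.Adj x z ↔ G.Adj y z) :=
  or_iff_right_of_imp fun h _ _ _ => h ▸ Iff.rfl

theorem twinEq_trans {x y z : V} (hxy : TwinEq G x y) (hyz : TwinEq G y z) : TwinEq G x z := by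
  rw [twinEq_iff] at *
  intro w hwx hwz
  by_cases hwy : w = y
  · subst hwy
    by_cases hxz : x = z
    · rw [hxz]
    rw [G.adj_comm x w, hyz x (Ne.symm hwx) hxz, G.adj_comm z x, hxy z (Ne.symm hxz) (Ne.symm hwz),
      G.adj_comm]
  · exact (hxy w hwx hwy).trans (hyz w hwy hwz)

variable (G) in
def twinSetoid : Setoid V where
  r := TwinEq G
  iseqv :=
    ⟨fun _ => Or.inl rfl,
      fun h => twinEq_iff.2 fun z hzy hzx => (twinEq_iff.1 h z hzx hzy).symm, twinEq_trans⟩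

theorem adj_iff_adj_of_twinEq {u u' v v' : V} (hu : TwinEq G u u') (hv : TwinEq G v v')
    (huv : u ≠ v) (huv' : u' ≠ v') : G.Adj u v ↔ G.Adj u' v' := by
  by_cases h : u = v'
  · by_cases h' : u' = v
    · subst h h'
      exact G.adj_comm _ _
    calc G.Adj u v ↔ G.Adj u' v := twinEq_iff.1 hu v (Ne.symm huv) (Ne.symm h')
      _ ↔ G.Adj u' v' := by rw [G.adj_comm, G.adj_comm u']; exact twinEq_iff.1 hv u' h' huv'
  · calc G.Adj u v ↔ G.Adj u v' := by rw [G.adj_comm, G.adj_comm u]; exact twinEq_iff.1 hv u huv h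
      _ ↔ G.Adj u' v' := twinEq_iff.1 hu v' (Ne.symm h) (Ne.symm huv')

end Twins

section Blowup

variable {ι : Type*}

def IsBlowup (G : SimpleGraph V) (κ : V → ι) (P : ι → ι → Prop) : Prop :=
  ∀ u v, u ≠ v → (G.Adj u v ↔ P (κ u) (κ v))

theorem isBlowup_twinSetoid (G : SimpleGraph V) :
    IsBlowup G (Quotient.mk (twinSetoid G))
      fun a b => ∃ u v, ⟦u⟧ = a ∧ ⟦v⟧ = b ∧ u ≠ v ∧ G.Adj u v := by
  refine fun u v huv => ⟨fun h => ⟨u, v, rfl, rfl, huv, h⟩, ?_⟩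
  rintro ⟨u', v', hu, hv, huv', h⟩
  exact (adj_iff_adj_of_twinEq (Quotient.exact hu.symm) (Quotient.exact hv.symm) huv huv').2 h

theorem IsBlowup.comp_injective {ι' : Type*} {G : SimpleGraph V} {κ : V → ι}
    {P : ι → ι → Prop} (h : IsBlowup G κ P) {e : ι → ι'} (he : Function.Injective e) :
    IsBlowup G (e ∘ κ) fun i j => ∃ a b, e a = i ∧ e b = j ∧ P a b := by
  refine fun u v huv => (h u v huv).trans ⟨fun hP => ⟨_, _, rfl, rfl, hP⟩, ?_⟩
  rintro ⟨a, b, ha, hb, hP⟩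
  rwa [he ha, he hb] at hP

theorem exists_isBlowup_fin [Fintype V] {K : ℕ} (G : SimpleGraph V)
    (hK : Fintype.card (Quotient (twinSetoid G)) ≤ K) :
    ∃ (κ : V → Fin K) (P : Fin K → Fin K → Prop), IsBlowup G κ P := by
  obtain ⟨e⟩ := Function.Embedding.nonempty_of_card_le (hK.trans (Fintype.card_fin K).ge)
  exact ⟨_, _, (isBlowup_twinSetoid G).comp_injective e.injective⟩

theorem IsBlowup.nonempty_embedding [Fintype V] [Fintype W] [DecidableEq ι] {G : SimpleGraph V}
    {H : SimpleGraph W} {κ : V → ι} {μ : W → ι} {P : ι → ι → Prop} (hG : IsBlowup G κ P)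
    (hH : IsBlowup H μ P)
    (hcard : ∀ i, Fintype.card {v // κ v = i} ≤ Fintype.card {w // μ w = i}) :
    Nonempty (G ↪g H) := by
  have e i := Classical.choice (Function.Embedding.nonempty_of_card_le (hcard i))
  let f : V ↪ W := (Equiv.sigmaFiberEquiv κ).symm.toEmbedding.trans
    ((Function.Embedding.sigmaMap (Function.Embedding.refl ι) e).trans
      (Equiv.sigmaFiberEquiv μ).toEmbedding)
  have hf v : μ (f v) = κ v := (e (κ v) ⟨v, rfl⟩).2
  refine ⟨⟨f, fun {u v} => ?_⟩⟩
  by_cases huv : u = v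
  · simp [huv]
  · rw [hG u v huv, hH _ _ (f.injective.ne huv), hf, hf]

end Blowup

section Chains

variable {G : SimpleGraph V} {m : ℕ}

structure IsSeparatingChain (G : SimpleGraph V) (z c : Fin m → V) : Prop where
  ne : ∀ i, z i ≠ c i
  adj_iff : ∀ {i j}, i < j → z j ≠ c i → (G.Adj (z j) (c i) ↔ ¬G.Adj (z i) (c i))

theorem IsSeparatingChain.comap {f : W → V} (hf : Function.Injective f) {z c : Fin m → W}
    (h : IsSeparatingChain G (f ∘ z) (f ∘ c)) : IsSeparatingChain (G.comap f) z c :=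
  ⟨fun i e => h.ne i (congrArg f e), fun hij hne => h.adj_iff hij (hf.ne hne)⟩

theorem exists_separator_of_pairwise_not_twinEq {S : Finset V}
    (hS : (S : Set V).Pairwise fun u v => ¬TwinEq G u v) (hcard : 2 ^ (m + 1) ≤ #S) :
    ∃ z₀ ∈ S, ∃ w, z₀ ≠ w ∧ ∃ S' ⊆ S, 2 ^ m ≤ #S' ∧ ∀ s ∈ S', (G.Adj s w ↔ ¬G.Adj z₀ w) := by
  obtain ⟨u, hu, v, hv, huv⟩ :=
    one_lt_card.1 (lt_of_lt_of_le (Nat.one_lt_two_pow m.succ_ne_zero) hcard)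
  obtain ⟨w, hwu, hwv, hw⟩ : ∃ w, w ≠ u ∧ w ≠ v ∧ ¬(G.Adj u w ↔ G.Adj v w) := by
    simpa [twinEq_iff] using hS hu hv huv
  obtain ⟨x, hx, hxw, hxadj, y, hy, hyw, hyadj⟩ :
      ∃ x ∈ S, x ≠ w ∧ G.Adj x w ∧ ∃ y ∈ S, y ≠ w ∧ ¬G.Adj y w := by
    by_cases h : G.Adj u w
    · exact ⟨u, hu, hwu.symm, h, v, hv, hwv.symm, fun h' => hw (iff_of_true h h')⟩
    · exact ⟨v, hv, hwv.symm, by tauto, u, hu, hwu.symm, h⟩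
  have hsplit := card_filter_add_card_filter_not (s := S) (fun s => G.Adj s w)
  by_cases hbig : 2 ^ m ≤ #(S.filter fun s => G.Adj s w)
  · exact ⟨y, hy, w, hyw, _, filter_subset _ _, hbig,
      fun s hs => by simp [(mem_filter.1 hs).2, hyadj]⟩
  · refine ⟨x, hx, w, hxw, _, filter_subset (fun s => ¬G.Adj s w) S,
      by rw [pow_succ] at hcard; omega, fun s hs => by simp [(mem_filter.1 hs).2, hxadj]⟩

theorem exists_isSeparatingChain_of_pairwise_not_twinEq {S : Finset V}
    (hS : (S : Set V).Pairwise fun u v => ¬TwinEq G u v) (hcard : 2 ^ m ≤ #S) :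
    ∃ z c : Fin m → V, IsSeparatingChain G z c ∧ ∀ i, z i ∈ S := by
  induction m generalizing S with
  | zero => exact ⟨finZeroElim, finZeroElim, ⟨finZeroElim, fun {i} => i.elim0⟩, finZeroElim⟩
  | succ m ih =>
    obtain ⟨z₀, hz₀, w, hw, S', hS'S, hS'card, hS'adj⟩ :=
      exists_separator_of_pairwise_not_twinEq hS hcard
    obtain ⟨z, c, hzc, hzS'⟩ := ih (hS.mono (coe_subset.2 hS'S)) hS'card
    refine ⟨Fin.cons z₀ z, Fin.cons w c, ⟨fun i => ?_, fun {i j} hij hne => ?_⟩, fun i => ?_⟩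
    · cases i using Fin.cases <;> simp [hw, hzc.ne]
    · cases j using Fin.cases with
      | zero => exact absurd hij (Fin.not_lt_zero _)
      | succ j =>
        cases i using Fin.cases with
        | zero => simpa using hS'adj _ (hzS' j)
        | succ i => simpa using hzc.adj_iff (Fin.succ_lt_succ_iff.1 hij) (by simpa using hne)
    · cases i using Fin.cases <;> simp [hz₀, hS'S (hzS' _)]

theorem exists_isSeparatingChain_of_two_pow_le [Fintype V]
    (h : 2 ^ m ≤ Fintype.card (Quotient (twinSetoid G))) :
    ∃ z c : Fin m → V, IsSeparatingChain G z c := by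
  have hS : (univ.image (Quotient.out : Quotient (twinSetoid G) → V) : Set V).Pairwise
      fun u v => ¬TwinEq G u v := by
    simp only [coe_image, coe_univ, Set.image_univ]
    rintro _ ⟨a, rfl⟩ _ ⟨b, rfl⟩ hne htw
    exact hne (congrArg _ (Quotient.out_equiv_out.1 htw))
  rw [← card_univ, ← card_image_of_injective _ Quotient.out_injective] at h
  obtain ⟨z, c, hzc, -⟩ := exists_isSeparatingChain_of_pairwise_not_twinEq hS h
  exact ⟨z, c, hzc⟩

end Chains

theorem _root_.Matrix.rank_add_le {K m n : Type*} [Field K] [Finite m] [Fintype n]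
    (A B : Matrix m n K) : (A + B).rank ≤ A.rank + B.rank := by
  rw [Matrix.rank, Matrix.rank, Matrix.rank, Matrix.mulVecLin_add]
  exact (Submodule.finrank_mono (LinearMap.range_add_le _ _)).trans
    (Submodule.finrank_add_le_finrank_add_finrank _ _)

section CutRank

variable [Fintype V] [DecidableEq V] {G : SimpleGraph V} {m : ℕ} {z c : Fin m → V}

theorem IsSeparatingChain.card_le_cutRank_add_one (h : IsSeparatingChain G z c) (X : Finset V) :
    #{i | z i ∈ X ∧ c i ∉ X} ≤ cutRank G X + 1 := by
  set I := univ.filter fun i => z i ∈ X ∧ c i ∉ X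
  have hI (i : I) : z i ∈ X ∧ c i ∉ X := (mem_filter.1 i.2).2
  let N : Matrix I I (ZMod 2) := Matrix.of fun i j => if G.Adj (z i) (c j) then 1 else 0
  -- `N` agrees with the rank-one matrix `A` below the diagonal and differs from it on the
  -- diagonal, so over GF(2) the matrix `N + A` is unitriangular
  let A : Matrix I I (ZMod 2) :=
    Matrix.vecMulVec (fun _ => 1) fun j => if G.Adj (z j) (c j) then 0 else 1
  have hN : N.rank ≤ cutRank G X :=
    Matrix.rank_submatrix_le (Matrix.of fun (x : X) (y : (Xᶜ : Finset V)) =>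
      if G.Adj x.1 y.1 then (1 : ZMod 2) else 0) (fun i : I => ⟨z i, (hI i).1⟩)
      (fun j : I => ⟨c j, mem_compl.2 (hI j).2⟩)
  have hT : (N + A).IsUpperTriangular := by
    intro i j hji
    have := h.adj_iff hji fun e => (hI j).2 (e ▸ (hI i).1)
    simp only [N, A, Matrix.add_apply, Matrix.of_apply, Matrix.vecMulVec_apply, one_mul]
    split_ifs <;> tauto
  have hdiag (i : I) : (N + A) i i = 1 := by
    simp only [N, A, Matrix.add_apply, Matrix.of_apply, Matrix.vecMulVec_apply, one_mul]
    split_ifs <;> rfl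
  have hunit : IsUnit (N + A) := by
    simp [Matrix.isUnit_iff_isUnit_det, Matrix.det_of_isUpperTriangular hT, hdiag]
  calc #I = (N + A).rank := by rw [Matrix.rank_of_isUnit _ hunit, Fintype.card_coe]
    _ ≤ N.rank + A.rank := Matrix.rank_add_le _ _
    _ ≤ cutRank G X + 1 := add_le_add hN (Matrix.rank_vecMulVec_le _ _)

theorem four_mul_card_filter_mem_and_notMem {a b : V} (hab : a ≠ b) :
    4 * #{X : Finset V | a ∈ X ∧ b ∉ X} = 2 ^ Fintype.card V := by
  have himage : ({X : Finset V | a ∈ X ∧ b ∉ X} : Finset (Finset V)) =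
      (univ \ {a, b}).powerset.image (insert a) := by
    ext X
    simp only [mem_filter, mem_univ, true_and, mem_image, mem_powerset]
    constructor
    · rintro ⟨ha, hb⟩
      refine ⟨X.erase a, fun x hx => ?_, insert_erase ha⟩
      simp only [mem_erase] at hx
      simp only [mem_sdiff, mem_univ, mem_insert, mem_singleton, true_and]
      rintro (rfl | rfl) <;> tauto
    · rintro ⟨Y, hY, rfl⟩
      refine ⟨mem_insert_self a Y, fun hb => ?_⟩
      rcases mem_insert.1 hb with h | h
      · exact hab h.symm
      · simpa using hY h
  have hinj : Set.InjOn (insert a) ((univ \ {a, b}).powerset : Set (Finset V)) := by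
    intro Y hY Y' hY' h
    have ha : ∀ Z ∈ ((univ \ {a, b}).powerset : Set (Finset V)), a ∉ Z := fun Z hZ ha => by
      simpa using (mem_powerset.1 hZ) ha
    rw [← erase_insert (ha Y hY), h, erase_insert (ha Y' hY')]
  have hab2 : 2 ≤ Fintype.card V := by
    simpa [card_pair hab] using card_le_univ {a, b}
  rw [himage, card_image_of_injOn hinj, card_powerset, card_sdiff_of_subset (subset_univ _),
    card_pair hab, card_univ, show 4 = 2 ^ 2 by rfl, ← pow_add, Nat.add_sub_cancel' hab2]

theorem IsSeparatingChain.le_four_mul_avgCutRank_add_four (h : IsSeparatingChain G z c) :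
    (m : ℝ) ≤ 4 * avgCutRank G + 4 := by
  have hcount : m * 2 ^ Fintype.card V = 4 * ∑ X : Finset V, #{i | z i ∈ X ∧ c i ∉ X} := by
    simp only [card_filter]
    rw [sum_comm, mul_sum]
    simp only [← card_filter, four_mul_card_filter_mem_and_notMem (h.ne _), sum_const, card_univ,
      Fintype.card_fin, smul_eq_mul]
  have hle : ∑ X : Finset V, #{i | z i ∈ X ∧ c i ∉ X} ≤
      ∑ X : Finset V, cutRank G X + 2 ^ Fintype.card V := by
    calc _ ≤ ∑ X : Finset V, (cutRank G X + 1) :=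
          sum_le_sum fun X _ => h.card_le_cutRank_add_one X
      _ = _ := by
        rw [sum_add_distrib, sum_const, card_univ, Fintype.card_finset, smul_eq_mul, mul_one]
  have hreal : (m : ℝ) * 2 ^ Fintype.card V ≤
      4 * ∑ X : Finset V, (cutRank G X : ℝ) + 4 * 2 ^ Fintype.card V := by
    exact_mod_cast hcount.le.trans (by omega)
  have hpos : (0 : ℝ) < 2 ^ Fintype.card V := by positivity
  rw [avgCutRank, mul_div_assoc', div_add' _ _ _ hpos.ne', le_div_iff₀ hpos]
  linarith

end CutRank

section HereditaryClasses

theorem isIndSubgraph_of_embedding {H G : GraphOn} (f : H.2 ↪g G.2) : IsIndSubgraph H G :=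
  ⟨_, ⟨f.isoInduceRange⟩⟩

def minimalForbidden (C : Set GraphOn) : Set GraphOn :=
  {H | H ∉ C ∧ ∀ B : GraphOn, B.1 < H.1 → Nonempty (B.2 ↪g H.2) → B ∈ C}

theorem exists_minimalForbidden_embedding {C : Set GraphOn} {G : GraphOn} (hG : G ∉ C) :
    ∃ H ∈ minimalForbidden C, Nonempty (H.2 ↪g G.2) := by
  obtain ⟨H, ⟨hHC, ⟨e⟩⟩, hmin⟩ := (measure fun B : GraphOn => B.1).wf.has_min
    {B | B ∉ C ∧ Nonempty (B.2 ↪g G.2)} ⟨G, hG, ⟨SimpleGraph.Embedding.refl⟩⟩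
  exact ⟨H, ⟨hHC, fun B hlt ⟨f⟩ => by_contra fun hB => hmin B ⟨hB, ⟨f.trans e⟩⟩ hlt⟩, ⟨e⟩⟩

theorem card_twinSetoid_lt_of_mem_minimalForbidden {C : Set GraphOn} {α : ℝ}
    (hb : ∀ A ∈ C, avgCutRank A.2 ≤ α) {m : ℕ} (hm : 4 * α + 4 < m) (hm3 : 3 ≤ m)
    {H : GraphOn} (hH : H ∈ minimalForbidden C) :
    Fintype.card (Quotient (twinSetoid H.2)) < 2 ^ m := by
  have h2m : 2 * m < 2 ^ m :=
    Nat.le_induction (by norm_num) (fun k _ ih => by rw [pow_succ]; omega) m hm3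
  obtain ⟨n, G⟩ := H
  by_contra! hcard
  dsimp only at hcard
  obtain ⟨z, c, hzc⟩ := exists_isSeparatingChain_of_two_pow_le hcard
  -- the chain has at most `2 * m < 2 ^ m ≤ n` vertices, so it survives deleting a vertex
  obtain ⟨v, -, hv⟩ := exists_mem_notMem_of_card_lt_card (s := univ.image z ∪ univ.image c)
    (t := univ) <| calc
      _ ≤ #(univ.image z) + #(univ.image c) := card_union_le _ _
      _ ≤ m + m := add_le_add (card_image_le.trans (by simp)) (card_image_le.trans (by simp))
      _ < Fintype.card (Quotient (twinSetoid G)) := by omega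
      _ ≤ #univ := Fintype.card_quotient_le _
  obtain ⟨n, rfl⟩ := Nat.exists_eq_add_one.2 v.pos
  simp only [mem_union, mem_image, mem_univ, true_and, not_or, not_exists] at hv
  choose z' hz' using fun i => Fin.exists_succAbove_eq fun h => hv.1 i h
  choose c' hc' using fun i => Fin.exists_succAbove_eq fun h => hv.2 i h
  have hB : IsSeparatingChain (G.comap v.succAbove) z' c' := by
    refine IsSeparatingChain.comap Fin.succAbove_right_injective ?_
    convert hzc <;> ext i <;> simp [hz', hc']
  have hBC := hH.2 ⟨n, G.comap v.succAbove⟩ n.lt_succ_self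
    ⟨SimpleGraph.Embedding.comap v.succAboveEmb G⟩
  linarith [hB.le_four_mul_avgCutRank_add_four, hb _ hBC]

theorem exists_finset_embedding_basis {K : ℕ} {S : Set GraphOn}
    (hK : ∀ H ∈ S, Fintype.card (Quotient (twinSetoid H.2)) ≤ K)
    (hS : ∀ A ∈ S, ∀ B ∈ S, Nonempty (A.2 ↪g B.2) → ¬A.1 < B.1) :
    ∃ L : Finset GraphOn, ↑L ⊆ S ∧ ∀ H ∈ S, ∃ H' ∈ L, Nonempty (H'.2 ↪g H.2) := by
  choose κ P hκP using fun H : S => exists_isBlowup_fin H.1.2 (hK H H.2)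
  obtain ⟨code, hcode⟩ : ∃ code : S → (Fin K → Fin K → Prop) × (Fin K → ℕ),
      ∀ H, code H = (P H, fun i => Fintype.card {v // κ H v = i}) := ⟨_, fun _ => rfl⟩
  have hemb (A B : S) (hP : (code A).1 = (code B).1) (hle : (code A).2 ≤ (code B).2) :
      Nonempty (A.1.2 ↪g B.1.2) := by
    simp only [hcode] at hP hle
    exact (hκP A).nonempty_embedding (hP ▸ hκP B) hle
  have hsum (H : S) : ∑ i, (code H).2 i = H.1.1 := by
    simp [hcode, ← Fintype.card_sigma, Fintype.card_congr (Equiv.sigmaFiberEquiv (κ H))]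
  have hfin : (Set.range code).Finite := by
    refine IsAntichain.finite_of_wellQuasiOrdered (r := fun p q => p.1 = q.1 ∧ p.2 ≤ q.2) ?_
      ((Finite.wellQuasiOrdered _).prod WellQuasiOrderedLE.wqo)
    rintro _ ⟨A, rfl⟩ _ ⟨B, rfl⟩ hne ⟨hP, hle⟩
    have hlt : (code A).2 < (code B).2 := lt_of_le_of_ne hle fun h => hne (Prod.ext hP h)
    exact hS A A.2 B B.2 (hemb A B hP hle) (hsum A ▸ hsum B ▸ Fintype.sum_strictMono hlt)
  have := hfin.fintype
  refine ⟨univ.image fun p : Set.range code => (Set.rangeSplitting code p).1, ?_, fun H hH => ?_⟩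
  · intro H hH
    obtain ⟨p, -, rfl⟩ := mem_image.1 hH
    exact (Set.rangeSplitting code p).2
  · have hp := Set.apply_rangeSplitting code ⟨code ⟨H, hH⟩, Set.mem_range_self _⟩
    exact ⟨_, mem_image_of_mem _ (mem_univ _), hemb _ ⟨H, hH⟩ (congrArg Prod.fst hp)
      (congrArg Prod.snd hp).le⟩

end HereditaryClasses

theorem stmt16_general (C : Set GraphOn)
    (hind : ∀ A ∈ C, ∀ B : GraphOn, IsIndSubgraph B A → B ∈ C)
    (α : ℝ) (hb : ∀ A ∈ C, avgCutRank A.2 ≤ α) :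
    ∃ L : Finset GraphOn, ∀ G : GraphOn,
      G ∈ C ↔ ∀ H ∈ L, ¬ IsIndSubgraph H G := by
  obtain ⟨m, hm⟩ := exists_nat_gt (max (4 * α + 4) 3)
  have hm3 : 3 ≤ m := by exact_mod_cast ((le_max_right _ _).trans_lt hm).le
  obtain ⟨L, hLC, hL⟩ := exists_finset_embedding_basis (S := minimalForbidden C)
    (fun H hH => (card_twinSetoid_lt_of_mem_minimalForbidden hb
      ((le_max_left _ _).trans_lt hm) hm3 hH).le)
    fun A hA B hB hAB hlt => hA.1 (hB.2 A hlt hAB)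
  refine ⟨L, fun G => ⟨fun hG H hH hHG => (hLC hH).1 (hind G hG H hHG), fun hG => ?_⟩⟩
  by_contra hGC
  obtain ⟨H, hH, ⟨e⟩⟩ := exists_minimalForbidden_embedding hGC
  obtain ⟨H', hH', ⟨e'⟩⟩ := hL H hH
  exact hG H' hH' (isIndSubgraph_of_embedding (e'.trans e))

/-- A hereditary, isomorphism-closed class of graphs of bounded
average cut-rank is characterized by finitely many forbidden induced subgraphs. -/
theorem stmt16 (C : Set GraphOn)
    (hiso : ∀ A ∈ C, ∀ B : GraphOn, Nonempty (B.2 ≃g A.2) → B ∈ C)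
    (hind : ∀ A ∈ C, ∀ B : GraphOn, IsIndSubgraph B A → B ∈ C)
    (α : ℝ) (hb : ∀ A ∈ C, avgCutRank A.2 ≤ α) :
    ∃ L : Finset GraphOn, ∀ G : GraphOn,
      G ∈ C ↔ ∀ H ∈ L, ¬ IsIndSubgraph H G :=
  stmt16_general C hind α hb

end AvgCutRank
end
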